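/- arXiv:2203.05804 — 5 statements merged into one kernel-verified Lean document; each statement's English description precedes it below -/
import Mathlib

section
/- Let Λ₁ and Λ₂ be positive definite d×d real matrices. Then for every vector φ ∈ ℝ^d, ‖φ‖_{Λ₁⁻¹} ≤ (1 + √(‖Λ₂⁻¹‖·‖Λ₂‖·‖Λ₁⁻¹‖·‖Λ₁ − Λ₂‖)) · ‖φ‖_{Λ₂⁻¹}, where ‖φ‖_A := √(φᵀ A φ). -/
/-!
Since `Λ₁⁻¹ - Λ₂⁻¹ = Λ₁⁻¹ (Λ₂ - Λ₁) Λ₂⁻¹`, the quadratic forms satisfy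
`φᵀΛ₁⁻¹φ ≤ φᵀΛ₂⁻¹φ + ‖Λ₁⁻¹‖‖Λ₁ - Λ₂‖‖Λ₂⁻¹‖ |φ|²`, and `|φ|² ≤ ‖Λ₂‖ φᵀΛ₂⁻¹φ` because
`Λ₂² ≤ ‖Λ₂‖ Λ₂` for a positive semidefinite matrix. Hence `φᵀΛ₁⁻¹φ ≤ (1 + c) φᵀΛ₂⁻¹φ` with
`c = ‖Λ₂⁻¹‖‖Λ₂‖‖Λ₁⁻¹‖‖Λ₁ - Λ₂‖`, and one takes square roots using `√(1 + c) ≤ 1 + √c`.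
-/

open Matrix

/-- Operator (spectral) norm of a real `d × d` matrix. -/
noncomputable def matOpNorm {d : ℕ} (M : Matrix (Fin d) (Fin d) ℝ) : ℝ :=
  ‖Matrix.toEuclideanCLM (𝕜 := ℝ) M‖

/-- Weighted (semi-)norm `‖φ‖_A = √(φᵀ A φ)`. -/
noncomputable def wNorm {d : ℕ} (A : Matrix (Fin d) (Fin d) ℝ) (φ : Fin d → ℝ) : ℝ :=
  Real.sqrt (φ ⬝ᵥ A.mulVec φ)

open scoped Matrix.Norms.L2Operator MatrixOrder

lemma Real.sqrt_one_add_le_one_add_sqrt {c : ℝ} (hc : 0 ≤ c) : √(1 + c) ≤ 1 + √c := by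
  rw [Real.sqrt_le_left (by positivity), add_sq, Real.sq_sqrt hc]
  nlinarith [Real.sqrt_nonneg c]

lemma EuclideanSpace.norm_toLp_sq {n : Type*} [Fintype n] (v : n → ℝ) :
    ‖WithLp.toLp 2 v‖ ^ 2 = v ⬝ᵥ v := by
  rw [EuclideanSpace.real_norm_sq_eq]
  simp [dotProduct, sq]

namespace Matrix

variable {n : Type*} [Fintype n] [DecidableEq n]

lemma dotProduct_mulVec_le_l2_opNorm_mul (A : Matrix n n ℝ) (x : n → ℝ) :
    x ⬝ᵥ A *ᵥ x ≤ ‖A‖ * (x ⬝ᵥ x) := by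
  calc x ⬝ᵥ A *ᵥ x = inner ℝ (WithLp.toLp 2 x) (WithLp.toLp 2 (A *ᵥ x)) := by
        simp [EuclideanSpace.inner_toLp_toLp, dotProduct, mul_comm]
    _ ≤ ‖WithLp.toLp 2 x‖ * ‖WithLp.toLp 2 (A *ᵥ x)‖ := real_inner_le_norm _ _
    _ ≤ ‖WithLp.toLp 2 x‖ * (‖A‖ * ‖WithLp.toLp 2 x‖) := by
        gcongr; exact A.l2_opNorm_mulVec (WithLp.toLp 2 x)
    _ = ‖A‖ * (x ⬝ᵥ x) := by rw [← EuclideanSpace.norm_toLp_sq]; ring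

lemma PosSemidef.exists_eq_conjTranspose_mul_self {A : Matrix n n ℝ} (hA : A.PosSemidef) :
    ∃ B : Matrix n n ℝ, A = Bᴴ * B :=
  ⟨CFC.sqrt A, by
    rw [(CFC.sqrt_nonneg A).posSemidef.isHermitian.eq, CFC.sqrt_mul_sqrt_self A hA.nonneg]⟩

-- With `A = Bᴴ B` this is `|Bᴴ (B y)|² ≤ ‖Bᴴ‖² |B y|²`, and `‖Bᴴ‖² = ‖Bᴴ B‖`.
lemma PosSemidef.mulVec_dotProduct_mulVec_le {A : Matrix n n ℝ} (hA : A.PosSemidef) (y : n → ℝ) :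
    A *ᵥ y ⬝ᵥ A *ᵥ y ≤ ‖A‖ * (y ⬝ᵥ A *ᵥ y) := by
  obtain ⟨B, rfl⟩ := hA.exists_eq_conjTranspose_mul_self
  have hBy : y ⬝ᵥ (Bᴴ * B) *ᵥ y = B *ᵥ y ⬝ᵥ B *ᵥ y := by
    rw [← mulVec_mulVec, dotProduct_mulVec, conjTranspose_eq_transpose_of_trivial,
      vecMul_transpose]
  calc (Bᴴ * B) *ᵥ y ⬝ᵥ (Bᴴ * B) *ᵥ y = ‖WithLp.toLp 2 (Bᴴ *ᵥ (B *ᵥ y))‖ ^ 2 := by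
        rw [EuclideanSpace.norm_toLp_sq, mulVec_mulVec]
    _ ≤ (‖Bᴴ‖ * ‖WithLp.toLp 2 (B *ᵥ y)‖) ^ 2 := by
        gcongr; exact Bᴴ.l2_opNorm_mulVec (WithLp.toLp 2 (B *ᵥ y))
    _ = ‖Bᴴ * B‖ * (y ⬝ᵥ (Bᴴ * B) *ᵥ y) := by
        rw [l2_opNorm_conjTranspose_mul_self, l2_opNorm_conjTranspose, hBy,
          ← EuclideanSpace.norm_toLp_sq]
        ring

lemma PosDef.dotProduct_self_le_l2_opNorm_mul_inv {A : Matrix n n ℝ} (hA : A.PosDef)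
    (x : n → ℝ) : x ⬝ᵥ x ≤ ‖A‖ * (x ⬝ᵥ A⁻¹ *ᵥ x) := by
  have hx : A *ᵥ A⁻¹ *ᵥ x = x := by
    rw [mulVec_mulVec, mul_nonsing_inv _ (isUnit_iff_isUnit_det A |>.mp hA.isUnit), one_mulVec]
  have hq : x ⬝ᵥ A⁻¹ *ᵥ x = A⁻¹ *ᵥ x ⬝ᵥ A *ᵥ A⁻¹ *ᵥ x := by
    rw [hx, dotProduct_comm]
  simpa only [hq, hx] using hA.posSemidef.mulVec_dotProduct_mulVec_le (A⁻¹ *ᵥ x)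

lemma l2_opNorm_inv_sub_inv_le {A B : Matrix n n ℝ} (hA : IsUnit A) (hB : IsUnit B) :
    ‖A⁻¹ - B⁻¹‖ ≤ ‖A⁻¹‖ * ‖A - B‖ * ‖B⁻¹‖ := by
  rw [inv_sub_inv (iff_of_true hA hB), ← norm_neg (A - B), neg_sub]
  exact l2_opNorm_mul _ _ |>.trans (by gcongr; exact l2_opNorm_mul _ _)

lemma PosDef.dotProduct_inv_mulVec_le {A B : Matrix n n ℝ} (hA : IsUnit A) (hB : B.PosDef)
    (x : n → ℝ) :
    x ⬝ᵥ A⁻¹ *ᵥ x ≤ (1 + ‖B⁻¹‖ * ‖B‖ * ‖A⁻¹‖ * ‖A - B‖) * (x ⬝ᵥ B⁻¹ *ᵥ x) := by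
  have hdiff : x ⬝ᵥ (A⁻¹ - B⁻¹) *ᵥ x ≤ ‖B⁻¹‖ * ‖B‖ * ‖A⁻¹‖ * ‖A - B‖ * (x ⬝ᵥ B⁻¹ *ᵥ x) :=
    calc x ⬝ᵥ (A⁻¹ - B⁻¹) *ᵥ x ≤ ‖A⁻¹ - B⁻¹‖ * (x ⬝ᵥ x) :=
          dotProduct_mulVec_le_l2_opNorm_mul _ _
      _ ≤ ‖A⁻¹‖ * ‖A - B‖ * ‖B⁻¹‖ * (‖B‖ * (x ⬝ᵥ B⁻¹ *ᵥ x)) := by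
          refine mul_le_mul (l2_opNorm_inv_sub_inv_le hA hB.isUnit)
            (hB.dotProduct_self_le_l2_opNorm_mul_inv x) ?_ (by positivity)
          simpa using dotProduct_star_self_nonneg x
      _ = _ := by ring
  rw [sub_mulVec, dotProduct_sub] at hdiff
  linarith

end Matrix

lemma matOpNorm_eq_l2_opNorm {d : ℕ} (M : Matrix (Fin d) (Fin d) ℝ) : matOpNorm M = ‖M‖ := rfl

/-- For positive definite `Λ₁, Λ₂` and any `φ ∈ ℝ^d`,
`‖φ‖_{Λ₁⁻¹} ≤ (1 + √(‖Λ₂⁻¹‖·‖Λ₂‖·‖Λ₁⁻¹‖·‖Λ₁ − Λ₂‖)) · ‖φ‖_{Λ₂⁻¹}`. -/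
theorem stmt1 {d : ℕ} (Λ₁ Λ₂ : Matrix (Fin d) (Fin d) ℝ)
    (h₁ : Λ₁.PosDef) (h₂ : Λ₂.PosDef) (φ : Fin d → ℝ) :
    wNorm Λ₁⁻¹ φ ≤
      (1 + Real.sqrt (matOpNorm Λ₂⁻¹ * matOpNorm Λ₂ * matOpNorm Λ₁⁻¹ * matOpNorm (Λ₁ - Λ₂)))
        * wNorm Λ₂⁻¹ φ := by
  simp only [wNorm, matOpNorm_eq_l2_opNorm]
  set c := ‖Λ₂⁻¹‖ * ‖Λ₂‖ * ‖Λ₁⁻¹‖ * ‖Λ₁ - Λ₂‖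
  have hc : 0 ≤ c := by positivity
  calc √(φ ⬝ᵥ Λ₁⁻¹ *ᵥ φ) ≤ √((1 + c) * (φ ⬝ᵥ Λ₂⁻¹ *ᵥ φ)) :=
        Real.sqrt_le_sqrt (h₂.dotProduct_inv_mulVec_le h₁.isUnit φ)
    _ = √(1 + c) * √(φ ⬝ᵥ Λ₂⁻¹ *ᵥ φ) := Real.sqrt_mul (by positivity) _
    _ ≤ (1 + √c) * √(φ ⬝ᵥ Λ₂⁻¹ *ᵥ φ) := by
        gcongr
        exact Real.sqrt_one_add_le_one_add_sqrt hc
end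

section
/- In a finite-horizon linear MDP with feature map φ satisfying ‖φ(s,a)‖₂ ≤ 1, reward parameter θ_h with ‖θ_h‖₂ ≤ 1, and transition measures ν_h with ‖ν_h(S)‖₂ ≤ √d, for any function V : S → [0, H] there exists w_h ∈ ℝ^d such that (T_h V)(s,a) = ⟨φ(s,a), w_h⟩ for all (s,a) and ‖w_h‖₂ ≤ 2H√d, where (T_h V)(s,a) = r_h(s,a) + ∫_S V(s') P_h(ds'|s,a). -/
/-!
Take `w = θ + u` with `u i = ∫ V dν_i`. Since `0 ≤ V ≤ H`, each `|u i|` is at most `H · ν_i(S)`,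
so `‖u‖₂ ≤ H √d` and `‖w‖₂ ≤ 1 + H √d ≤ 2 H √d`.
-/

open MeasureTheory

/-- Euclidean (ℓ²) norm of a vector in `ℝ^d`. -/
noncomputable def vecNorm {d : ℕ} (v : Fin d → ℝ) : ℝ :=
  Real.sqrt (∑ i, (v i) ^ 2)

lemma vecNorm_eq_norm_toLp {d : ℕ} (v : Fin d → ℝ) : vecNorm v = ‖WithLp.toLp 2 v‖ := by
  simp [EuclideanSpace.norm_eq, vecNorm, sq_abs]

lemma vecNorm_add_le {d : ℕ} (v w : Fin d → ℝ) : vecNorm (v + w) ≤ vecNorm v + vecNorm w := by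
  simpa only [vecNorm_eq_norm_toLp, WithLp.toLp_add] using norm_add_le _ _

lemma vecNorm_le_mul_vecNorm_of_abs_le {d : ℕ} {u v : Fin d → ℝ} {c : ℝ} (hc : 0 ≤ c)
    (h : ∀ i, |u i| ≤ c * |v i|) : vecNorm u ≤ c * vecNorm v := by
  have hsq : ∑ i, u i ^ 2 ≤ c ^ 2 * ∑ i, v i ^ 2 := by
    rw [Finset.mul_sum]
    gcongr with i
    calc u i ^ 2 = |u i| ^ 2 := (sq_abs _).symm
      _ ≤ (c * |v i|) ^ 2 := by gcongr; exact h i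
      _ = c ^ 2 * v i ^ 2 := by rw [mul_pow, sq_abs]
  calc vecNorm u ≤ Real.sqrt (c ^ 2 * ∑ i, v i ^ 2) := Real.sqrt_le_sqrt hsq
    _ = c * vecNorm v := by rw [Real.sqrt_mul (sq_nonneg c), Real.sqrt_sq hc, vecNorm]

theorem stmt3_general {S A : Type*} [MeasurableSpace S] {d : ℕ} (hd : 1 ≤ d)
    (H : ℝ) (hH : 1 ≤ H)
    (φ : S → A → Fin d → ℝ)
    (θ : Fin d → ℝ) (hθ : vecNorm θ ≤ 1)
    (ν : Fin d → Measure S) [∀ i, IsFiniteMeasure (ν i)]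
    (hν : vecNorm (fun i => ((ν i) Set.univ).toReal) ≤ Real.sqrt d)
    (V : S → ℝ) (hV0 : ∀ s, 0 ≤ V s) (hVH : ∀ s, V s ≤ H)
    (r : S → A → ℝ) (hr : ∀ s a, r s a = ∑ i, φ s a i * θ i)
    (PV : S → A → ℝ) (hPV : ∀ s a, PV s a = ∑ i, φ s a i * ∫ s', V s' ∂(ν i)) :
    ∃ w : Fin d → ℝ,
      (∀ s a, r s a + PV s a = ∑ i, φ s a i * w i) ∧ vecNorm w ≤ 2 * H * Real.sqrt d := by
  set u : Fin d → ℝ := fun i => ∫ s', V s' ∂(ν i)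
  have hH0 : 0 ≤ H := zero_le_one.trans hH
  have hu_le : ∀ i, |u i| ≤ H * |((ν i) Set.univ).toReal| := fun i => by
    simpa [Measure.real] using norm_integral_le_of_norm_le_const (μ := ν i) (f := V)
      (ae_of_all _ fun s => (Real.norm_of_nonneg (hV0 s)).trans_le (hVH s))
  have hu : vecNorm u ≤ H * Real.sqrt d :=
    (vecNorm_le_mul_vecNorm_of_abs_le hH0 hu_le).trans (mul_le_mul_of_nonneg_left hν hH0)
  have hd1 : 1 ≤ Real.sqrt d := Real.one_le_sqrt.mpr (by exact_mod_cast hd)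
  refine ⟨θ + u, fun s a => by simp [hr, hPV, u, mul_add, Finset.sum_add_distrib], ?_⟩
  calc vecNorm (θ + u) ≤ vecNorm θ + vecNorm u := vecNorm_add_le θ u
    _ ≤ 1 + H * Real.sqrt d := add_le_add hθ hu
    _ ≤ 2 * H * Real.sqrt d := by nlinarith

/-- In a linear MDP (at a fixed step `h`) with feature map `φ` bounded by 1,
reward parameter `θ` bounded by 1, and transition measures `ν_i` with `‖ν(S)‖₂ ≤ √d`,
for any `V : S → [0, H]` there is `w ∈ ℝ^d` with
`(T V)(s,a) = r(s,a) + ∫ V dP(·|s,a) = ⟨φ(s,a), w⟩` and `‖w‖₂ ≤ 2H√d`.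
Here the linear structure gives `r(s,a) = ⟨φ(s,a), θ⟩` and
`[P V](s,a) = ∑ i, φ(s,a)_i · ∫ V dν_i`. -/
theorem stmt3 {S A : Type*} [MeasurableSpace S] {d : ℕ} (hd : 1 ≤ d)
    (H : ℝ) (hH : 1 ≤ H)
    (φ : S → A → Fin d → ℝ) (hφ : ∀ s a, vecNorm (φ s a) ≤ 1)
    (θ : Fin d → ℝ) (hθ : vecNorm θ ≤ 1)
    (ν : Fin d → Measure S) [∀ i, IsFiniteMeasure (ν i)]
    (hν : vecNorm (fun i => ((ν i) Set.univ).toReal) ≤ Real.sqrt d)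
    (V : S → ℝ) (hVmeas : Measurable V) (hV0 : ∀ s, 0 ≤ V s) (hVH : ∀ s, V s ≤ H)
    (r : S → A → ℝ) (hr : ∀ s a, r s a = ∑ i, φ s a i * θ i)
    (PV : S → A → ℝ) (hPV : ∀ s a, PV s a = ∑ i, φ s a i * ∫ s', V s' ∂(ν i)) :
    ∃ w : Fin d → ℝ,
      (∀ s a, r s a + PV s a = ∑ i, φ s a i * w i) ∧ vecNorm w ≤ 2 * H * Real.sqrt d :=
  stmt3_general hd H hH φ θ hθ ν hν V hV0 hVH r hr PV hPV
end

section
/- Let π = {π_h} and π' = {π'_h} be two policies in a finite-horizon MDP with horizon H, let {Q̂_h}_{h=1}^H be arbitrary Q-functions, and define V̂_h(s) := ⟨Q̂_h(s,·), π_h(·|s)⟩ with V̂_{H+1} ≡ 0. Then for every state s, V̂₁(s) − V₁^{π'}(s) = Σ_{h=1}^H E_{π'}[⟨Q̂_h(s_h,·), π_h(·|s_h) − π'_h(·|s_h)⟩ | s₁ = s] + Σ_{h=1}^H E_{π'}[Q̂_h(s_h,a_h) − (T_h V̂_{h+1})(s_h,a_h) | s₁ = s], where (T_h V)(s,a) =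 r_h(s,a) + (P_h V)(s,a). -/
open Finset

variable {S A : Type*}

/-- State distribution at step `n+1` (i.e. after `n` transitions) when following the
stochastic policy `π` in the MDP with transitions `P`, starting from `s₀` at step 1. -/
noncomputable def sdist [Fintype S] [Fintype A] [DecidableEq S]
    (P : ℕ → S → A → S → ℝ) (π : ℕ → S → A → ℝ) (s₀ : S) : ℕ → S → ℝ
  | 0 => fun s => if s = s₀ then 1 else 0
  | n + 1 => fun s => ∑ t : S, ∑ a : A, sdist P π s₀ n t * π (n + 1) t a * P (n + 1) t a s

/-- `polVal P r π n h s` is the value `E_π[Σ_{t=h}^{h+n-1} r_t | s_h = s]` of policy `π`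
over the next `n` steps starting at step `h` in state `s`.  The value function of `π` in a
horizon-`H` MDP is `V^π_h = polVal P r π (H + 1 - h) h`. -/
noncomputable def polVal [Fintype S] [Fintype A]
    (P : ℕ → S → A → S → ℝ) (r : ℕ → S → A → ℝ) (π : ℕ → S → A → ℝ) :
    ℕ → ℕ → S → ℝ
  | 0, _, _ => 0
  | n + 1, h, s =>
      ∑ a : A, π h s a * (r h s a + ∑ s' : S, P h s a s' * polVal P r π n (h + 1) s')

/-- **extended value difference.** For two policies `π, π'`, arbitrary
Q-functions `Q̂_h` with `V̂_h(s) = ⟨Q̂_h(s,·), π_h(·|s)⟩` for `1 ≤ h ≤ H`, `V̂_{H+1} ≡ 0`: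
`V̂₁(s) − V₁^{π'}(s) = Σ_h E_{π'}[⟨Q̂_h(s_h,·), π_h(·|s_h) − π'_h(·|s_h)⟩ | s₁ = s]
 + Σ_h E_{π'}[Q̂_h(s_h,a_h) − (T_h V̂_{h+1})(s_h,a_h) | s₁ = s]`. -/
theorem stmt4 [Fintype S] [Fintype A] [DecidableEq S] (H : ℕ)
    (P : ℕ → S → A → S → ℝ) (r : ℕ → S → A → ℝ)
    (π π' : ℕ → S → A → ℝ)
    (hPpos : ∀ h s a s', 0 ≤ P h s a s') (hPsum : ∀ h s a, ∑ s' : S, P h s a s' = 1)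
    (hπpos : ∀ h s a, 0 ≤ π h s a) (hπsum : ∀ h s, ∑ a : A, π h s a = 1)
    (hπ'pos : ∀ h s a, 0 ≤ π' h s a) (hπ'sum : ∀ h s, ∑ a : A, π' h s a = 1)
    (Qhat : ℕ → S → A → ℝ) (Vhat : ℕ → S → ℝ)
    (hVhat : ∀ h, 1 ≤ h → h ≤ H → ∀ s, Vhat h s = ∑ a : A, π h s a * Qhat h s a)
    (hVend : ∀ s, Vhat (H + 1) s = 0) :
    ∀ s : S,
      Vhat 1 s - polVal P r π' H 1 s =
        (∑ h ∈ Finset.Icc 1 H, ∑ t : S, sdist P π' s (h - 1) t *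
            ∑ a : A, Qhat h t a * (π h t a - π' h t a))
        + (∑ h ∈ Finset.Icc 1 H, ∑ t : S, sdist P π' s (h - 1) t *
            ∑ a : A, π' h t a *
              (Qhat h t a - (r h t a + ∑ s' : S, P h t a s' * Vhat (h + 1) s'))) := by
  intro s
  have key : ∀ n h, 1 ≤ h → h + n = H + 1 →
      (∑ t : S, sdist P π' s (h - 1) t * (Vhat h t - polVal P r π' n h t)) =
      ∑ k ∈ Finset.Icc h H,
        ((∑ t : S, sdist P π' s (k - 1) t * ∑ a : A, Qhat k t a * (π k t a - π' k t a))
        + (∑ t : S, sdist P π' s (k - 1) t * ∑ a : A, π' k t a *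
            (Qhat k t a - (r k t a + ∑ s' : S, P k t a s' * Vhat (k + 1) s')))) := by
    intro n
    induction n with
    | zero =>
        intro h h1 hH
        have hh : h = H + 1 := by omega
        subst hh
        rw [Finset.Icc_eq_empty (by omega), Finset.sum_empty]
        simp [polVal, hVend]
    | succ n ih =>
        rintro (_ | m) h1 hH
        · omega
        have hm : 1 ≤ m + 1 := h1
        have hle : m + 1 ≤ H := by omega
        have point : ∀ t, Vhat (m + 1) t - polVal P r π' (n + 1) (m + 1) t =
            (∑ a : A, Qhat (m + 1) t a * (π (m + 1) t a - π' (m + 1) t a))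
            + (∑ a : A, π' (m + 1) t a * (Qhat (m + 1) t a -
                (r (m + 1) t a + ∑ s' : S, P (m + 1) t a s' * Vhat (m + 1 + 1) s')))
            + (∑ a : A, π' (m + 1) t a * ∑ s' : S, P (m + 1) t a s' *
                (Vhat (m + 1 + 1) s' - polVal P r π' n (m + 1 + 1) s')) := by
          intro t
          rw [hVhat (m + 1) hm hle t, polVal]
          simp only [mul_sub, mul_add, sub_mul, Finset.sum_sub_distrib, Finset.sum_add_distrib,
            mul_comm, mul_left_comm]
          ring
        have hstep : (∑ t : S, sdist P π' s (m + 1 - 1) t *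
              (Vhat (m + 1) t - polVal P r π' (n + 1) (m + 1) t)) =
            (∑ t : S, sdist P π' s (m + 1 - 1) t *
              ∑ a : A, Qhat (m + 1) t a * (π (m + 1) t a - π' (m + 1) t a))
            + (∑ t : S, sdist P π' s (m + 1 - 1) t * ∑ a : A, π' (m + 1) t a *
                (Qhat (m + 1) t a - (r (m + 1) t a +
                  ∑ s' : S, P (m + 1) t a s' * Vhat (m + 1 + 1) s')))
            + (∑ s' : S, sdist P π' s (m + 1) s' *
                (Vhat (m + 1 + 1) s' - polVal P r π' n (m + 1 + 1) s')) := by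
          simp only [point, mul_add, Finset.sum_add_distrib]
          congr 1
          show (∑ t : S, sdist P π' s m t * ∑ a : A, π' (m + 1) t a *
              ∑ s' : S, P (m + 1) t a s' *
                (Vhat (m + 1 + 1) s' - polVal P r π' n (m + 1 + 1) s')) = _
          simp only [sdist, Finset.sum_mul, Finset.mul_sum, mul_assoc]
          conv_rhs => rw [Finset.sum_comm]
          exact Finset.sum_congr rfl fun t _ => Finset.sum_comm
        have hIcc : Finset.Icc (m + 1) H = insert (m + 1) (Finset.Icc (m + 1 + 1) H) := by
          ext x
          simp only [Finset.mem_Icc, Finset.mem_insert]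
          omega
        have ih' := ih (m + 1 + 1) (by omega) (by omega)
        simp only [Nat.add_sub_cancel] at ih'
        rw [hstep, ih', hIcc, Finset.sum_insert (by simp)]
  have h0 : ∀ f : S → ℝ, (∑ t : S, sdist P π' s 0 t * f t) = f s := by
    intro f
    simp [sdist]
  have := key H 1 le_rfl (by omega)
  rw [h0 _] at this
  rw [this, Finset.sum_add_distrib]
end

section
/- Let π̂ be a policy with π̂_h(s) maximizing ⟨Q̂_h(s,·), π_h(·|s)⟩ over distributions π_h(·|s), where Q̂_h are arbitrary Q-functions with V̂_h(s) = max_{π_h}⟨Q̂_h(s,·), π_h(·|s)⟩ and ζ_h := T_h V̂_{h+1} − Q̂_h. If 0 ≤ ζ_h(s,a) ≤ 2Γ_h(s,a) for all s, a, h, then for every policy π and state s: V₁^π(s) − V₁^{π̂}(s) ≤ 2·Σ_{h=1}^H E_π[Γ_h(s_h,a_h) | s₁ = s]. -/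
open Finset

variable {S A : Type*}

lemma sdist_nonneg' [Fintype S] [Fintype A] [DecidableEq S]
    (P : ℕ → S → A → S → ℝ) (π : ℕ → S → A → ℝ)
    (hP : ∀ h s a s', 0 ≤ P h s a s') (hπ : ∀ h s a, 0 ≤ π h s a) (s₀ : S) :
    ∀ n t, 0 ≤ sdist P π s₀ n t := by
  intro n
  induction n with
  | zero => intro t; simp only [sdist]; positivity
  | succ n ih =>
    intro t
    simp only [sdist]
    apply Finset.sum_nonneg; intro u _
    apply Finset.sum_nonneg; intro a _
    exact mul_nonneg (mul_nonneg (ih u) (hπ _ _ _)) (hP _ _ _ _)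

lemma prop_lemma' [Fintype S] [Fintype A] [DecidableEq S] (H : ℕ)
    (P : ℕ → S → A → S → ℝ) (π : ℕ → S → A → ℝ)
    (hP : ∀ h s a s', 0 ≤ P h s a s') (hπ : ∀ h s a, 0 ≤ π h s a)
    (f g : ℕ → S → ℝ)
    (hstep : ∀ h, 1 ≤ h → h ≤ H → ∀ t,
      f h t ≤ g h t + ∑ a : A, ∑ s' : S, π h t a * P h t a s' * f (h + 1) s')
    (hend : ∀ t, f (H + 1) t = 0) (s₀ : S) :
    ∀ k m, m + k = H →
      ∑ t : S, sdist P π s₀ m t * f (m + 1) t ≤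
        ∑ h ∈ Finset.Icc (m + 1) H, ∑ t : S, sdist P π s₀ (h - 1) t * g h t := by
  intro k
  induction k with
  | zero =>
    intro m hm; subst hm
    simp [hend]
  | succ k ih =>
    intro m hm
    have hmH : m + 1 ≤ H := by omega
    have key : ∑ s' : S, sdist P π s₀ (m + 1) s' * f (m + 2) s' =
        ∑ t : S, ∑ a : A, ∑ s' : S,
          sdist P π s₀ m t * π (m + 1) t a * P (m + 1) t a s' * f (m + 2) s' := by
      simp only [sdist, Finset.sum_mul]
      rw [Finset.sum_comm]
      refine Finset.sum_congr rfl fun t _ => ?_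
      rw [Finset.sum_comm]
    have step2 : ∑ t : S, sdist P π s₀ m t *
          (g (m + 1) t + ∑ a : A, ∑ s' : S, π (m + 1) t a * P (m + 1) t a s' * f (m + 2) s') =
        ∑ t : S, sdist P π s₀ m t * g (m + 1) t +
          ∑ s' : S, sdist P π s₀ (m + 1) s' * f (m + 2) s' := by
      rw [key, ← Finset.sum_add_distrib]
      refine Finset.sum_congr rfl fun t _ => ?_
      rw [mul_add]
      congr 1
      rw [Finset.mul_sum]
      refine Finset.sum_congr rfl fun a _ => ?_
      rw [Finset.mul_sum]
      refine Finset.sum_congr rfl fun s' _ => ?_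
      ring
    have step1 : ∑ t : S, sdist P π s₀ m t * f (m + 1) t ≤
        ∑ t : S, sdist P π s₀ m t *
          (g (m + 1) t + ∑ a : A, ∑ s' : S, π (m + 1) t a * P (m + 1) t a s' * f (m + 2) s') := by
      apply Finset.sum_le_sum; intro t _
      exact mul_le_mul_of_nonneg_left (hstep (m + 1) (by omega) hmH t)
        (sdist_nonneg' P π hP hπ s₀ m t)
    have hIcc : Finset.Icc (m + 1) H = insert (m + 1) (Finset.Icc (m + 2) H) := by
      ext x; simp only [Finset.mem_Icc, Finset.mem_insert]; omega
    calc ∑ t : S, sdist P π s₀ m t * f (m + 1) t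
        ≤ ∑ t : S, sdist P π s₀ m t * g (m + 1) t +
            ∑ s' : S, sdist P π s₀ (m + 1) s' * f (m + 2) s' := le_of_le_of_eq step1 step2
      _ ≤ ∑ t : S, sdist P π s₀ m t * g (m + 1) t +
            ∑ h ∈ Finset.Icc (m + 2) H, ∑ t : S, sdist P π s₀ (h - 1) t * g h t := by
          gcongr
          exact ih (m + 1) (by omega)
      _ = ∑ h ∈ Finset.Icc (m + 1) H, ∑ t : S, sdist P π s₀ (h - 1) t * g h t := by
          rw [hIcc, Finset.sum_insert (by simp)]
          simp

/-- Let `π̂` be greedy with respect to arbitrary Q-functions `Q̂_h`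
(so that `V̂_h(s) = ⟨Q̂_h(s,·), π̂_h(·|s)⟩ = max_{ρ} ⟨Q̂_h(s,·), ρ⟩`, `V̂_{H+1} ≡ 0`), and let
`ζ_h = T_h V̂_{h+1} − Q̂_h` be the Bellman error.  If `0 ≤ ζ_h(s,a) ≤ 2Γ_h(s,a)` for all
`s, a` and `1 ≤ h ≤ H`, then for every policy `π` and state `s`:
`V₁^π(s) − V₁^{π̂}(s) ≤ 2 Σ_{h=1}^H E_π[Γ_h(s_h, a_h) | s₁ = s]`. -/
theorem stmt6 [Fintype S] [Fintype A] [DecidableEq S] (H : ℕ)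
    (P : ℕ → S → A → S → ℝ) (r : ℕ → S → A → ℝ)
    (π πhat : ℕ → S → A → ℝ)
    (hPpos : ∀ h s a s', 0 ≤ P h s a s') (hPsum : ∀ h s a, ∑ s' : S, P h s a s' = 1)
    (hπpos : ∀ h s a, 0 ≤ π h s a) (hπsum : ∀ h s, ∑ a : A, π h s a = 1)
    (hπhatpos : ∀ h s a, 0 ≤ πhat h s a) (hπhatsum : ∀ h s, ∑ a : A, πhat h s a = 1)
    (Qhat : ℕ → S → A → ℝ) (Vhat : ℕ → S → ℝ)
    (hVhat : ∀ h, 1 ≤ h → h ≤ H → ∀ s, Vhat h s = ∑ a : A, πhat h s a * Qhat h s a)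
    (hgreedy : ∀ h s, ∀ ρ : A → ℝ, (∀ a, 0 ≤ ρ a) → (∑ a : A, ρ a = 1) →
      ∑ a : A, ρ a * Qhat h s a ≤ ∑ a : A, πhat h s a * Qhat h s a)
    (hVend : ∀ s, Vhat (H + 1) s = 0)
    (Γ : ℕ → S → A → ℝ)
    (hζ : ∀ h, 1 ≤ h → h ≤ H → ∀ t a,
      0 ≤ (r h t a + ∑ s' : S, P h t a s' * Vhat (h + 1) s') - Qhat h t a ∧
      (r h t a + ∑ s' : S, P h t a s' * Vhat (h + 1) s') - Qhat h t a ≤ 2 * Γ h t a) :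
    ∀ s : S,
      polVal P r π H 1 s - polVal P r πhat H 1 s ≤
        2 * ∑ h ∈ Finset.Icc 1 H, ∑ t : S, sdist P π s (h - 1) t *
              ∑ a : A, π h t a * Γ h t a := by
  have lemA : ∀ n h, h + n = H + 1 → 1 ≤ h → ∀ s, Vhat h s ≤ polVal P r πhat n h s := by
    intro n
    induction n with
    | zero =>
      intro h hh _ s
      have : h = H + 1 := by omega
      subst this
      simp [polVal, hVend]
    | succ n ih =>
      intro h hh h1 s
      have hH : h ≤ H := by omega
      rw [hVhat h h1 hH s]
      show _ ≤ ∑ a : A, πhat h s a *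
        (r h s a + ∑ s' : S, P h s a s' * polVal P r πhat n (h + 1) s')
      apply Finset.sum_le_sum
      intro a _
      apply mul_le_mul_of_nonneg_left _ (hπhatpos h s a)
      have h0 := (hζ h h1 hH s a).1
      have h2 : ∑ s' : S, P h s a s' * Vhat (h + 1) s' ≤
          ∑ s' : S, P h s a s' * polVal P r πhat n (h + 1) s' := by
        apply Finset.sum_le_sum
        intro s' _
        exact mul_le_mul_of_nonneg_left (ih (h + 1) (by omega) (by omega) s') (hPpos h s a s')
      linarith
  intro s
  have hA := lemA H 1 (by omega) le_rfl s
  set f : ℕ → S → ℝ := fun h t => polVal P r π (H + 1 - h) h t - Vhat h t with hf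
  set g : ℕ → S → ℝ := fun h t => ∑ a : A, π h t a * (2 * Γ h t a) with hg
  have hend : ∀ t, f (H + 1) t = 0 := by
    intro t
    simp only [hf, Nat.sub_self, polVal, hVend]
    ring
  have hstep : ∀ h, 1 ≤ h → h ≤ H → ∀ t,
      f h t ≤ g h t + ∑ a : A, ∑ s' : S, π h t a * P h t a s' * f (h + 1) s' := by
    intro h h1 hH t
    have hn : H + 1 - h = (H - h) + 1 := by omega
    have hn2 : H + 1 - (h + 1) = H - h := by omega
    have hpv : ∀ s', polVal P r π (H - h) (h + 1) s' = Vhat (h + 1) s' + f (h + 1) s' := by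
      intro s'; simp only [hf, hn2]; ring
    have key : ∀ a, π h t a * (r h t a + ∑ s' : S, P h t a s' * polVal P r π (H - h) (h + 1) s')
        ≤ π h t a * (2 * Γ h t a) + π h t a * Qhat h t a
            + ∑ s' : S, π h t a * P h t a s' * f (h + 1) s' := by
      intro a
      have e1 : r h t a + ∑ s' : S, P h t a s' * polVal P r π (H - h) (h + 1) s' =
          (r h t a + ∑ s' : S, P h t a s' * Vhat (h + 1) s')
            + ∑ s' : S, P h t a s' * f (h + 1) s' := by
        have : ∑ s' : S, P h t a s' * polVal P r π (H - h) (h + 1) s' =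
            ∑ s' : S, (P h t a s' * Vhat (h + 1) s' + P h t a s' * f (h + 1) s') :=
          Finset.sum_congr rfl fun s' _ => by rw [hpv s']; ring
        rw [this, Finset.sum_add_distrib]; ring
      rw [e1, mul_add]
      have e2 : π h t a * ∑ s' : S, P h t a s' * f (h + 1) s' =
          ∑ s' : S, π h t a * P h t a s' * f (h + 1) s' := by
        rw [Finset.mul_sum]
        exact Finset.sum_congr rfl fun s' _ => by ring
      rw [e2]
      have hb := (hζ h h1 hH t a).2
      have hm := mul_le_mul_of_nonneg_left
        (show r h t a + ∑ s' : S, P h t a s' * Vhat (h + 1) s' ≤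
          2 * Γ h t a + Qhat h t a by linarith) (hπpos h t a)
      have hd : π h t a * (2 * Γ h t a + Qhat h t a) =
          π h t a * (2 * Γ h t a) + π h t a * Qhat h t a := mul_add _ _ _
      linarith
    have e0 : f h t = (∑ a : A, π h t a *
        (r h t a + ∑ s' : S, P h t a s' * polVal P r π (H - h) (h + 1) s')) - Vhat h t := by
      simp only [hf, hn, polVal]
    have sumle := Finset.sum_le_sum (fun a (_ : a ∈ Finset.univ) => key a)
    rw [Finset.sum_add_distrib, Finset.sum_add_distrib] at sumle
    have hgr : ∑ a : A, π h t a * Qhat h t a ≤ Vhat h t := by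
      rw [hVhat h h1 hH t]
      exact hgreedy h t (fun a => π h t a) (fun a => hπpos h t a) (hπsum h t)
    have hgt : g h t = ∑ a : A, π h t a * (2 * Γ h t a) := rfl
    rw [e0, hgt]
    linarith
  have main := prop_lemma' H P π hPpos hπpos f g hstep hend s H 0 (by omega)
  simp only [zero_add] at main
  have hL : ∑ t : S, sdist P π s 0 t * f 1 t = f 1 s := by
    simp [sdist, ite_mul]
  have hf1 : f 1 s = polVal P r π H 1 s - Vhat 1 s := by
    simp only [hf, Nat.add_sub_cancel]
  have hR : ∑ h ∈ Finset.Icc 1 H, ∑ t : S, sdist P π s (h - 1) t * g h t =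
      2 * ∑ h ∈ Finset.Icc 1 H, ∑ t : S, sdist P π s (h - 1) t *
        ∑ a : A, π h t a * Γ h t a := by
    rw [Finset.mul_sum]
    refine Finset.sum_congr rfl fun h _ => ?_
    rw [Finset.mul_sum]
    refine Finset.sum_congr rfl fun t _ => ?_
    have : g h t = 2 * ∑ a : A, π h t a * Γ h t a := by
      rw [hg, Finset.mul_sum]
      exact Finset.sum_congr rfl fun a _ => by ring
    rw [this]; ring
  rw [hL, hR] at main
  linarith
end

section
/- Suppose |(T_h V̂_{h+1})(s,a) − (T̂_h V̂_{h+1})(s,a)| ≤ Γ_h(s,a) for all s, a, h, where Q̄_h = T̂_h V̂_{h+1} − Γ_h and Q̂_h = min{max{Q̄_h, 0}, H−h+1}. Then the Bellman error ζ_h(s,a) := (T_h V̂_{h+1})(s,a) − Q̂_h(s,a) satisfies 0 ≤ ζ_h(s,a) ≤ 2Γ_h(s,a) for all s, a, h, provided (T_h V̂_{h+1})(s,a) ∈ [0, H−h+1]. -/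
/-- Suppose `|(T_h V̂_{h+1})(s,a) − (T̂_h V̂_{h+1})(s,a)| ≤ Γ_h(s,a)` for all
`s, a` and `1 ≤ h ≤ H`, where `Q̄_h = T̂_h V̂_{h+1} − Γ_h` and
`Q̂_h = min{max{Q̄_h, 0}, H − h + 1}`, and that `(T_h V̂_{h+1})(s,a) ∈ [0, H − h + 1]`.
Then the Bellman error `ζ_h(s,a) = (T_h V̂_{h+1})(s,a) − Q̂_h(s,a)` satisfies
`0 ≤ ζ_h(s,a) ≤ 2Γ_h(s,a)`. -/
theorem stmt7 {S A : Type*} (H : ℕ)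
    (TV That Γ Qbar Qhat ζ : ℕ → S → A → ℝ)
    (hΓ : ∀ h, 1 ≤ h → h ≤ H → ∀ s a, 0 ≤ Γ h s a)
    (happrox : ∀ h, 1 ≤ h → h ≤ H → ∀ s a, |TV h s a - That h s a| ≤ Γ h s a)
    (hQbar : ∀ h s a, Qbar h s a = That h s a - Γ h s a)
    (hQhat : ∀ h s a, Qhat h s a = min (max (Qbar h s a) 0) ((H : ℝ) - h + 1))
    (hTV0 : ∀ h, 1 ≤ h → h ≤ H → ∀ s a, 0 ≤ TV h s a)
    (hTVub : ∀ h, 1 ≤ h → h ≤ H → ∀ s a, TV h s a ≤ (H : ℝ) - h + 1)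
    (hζ : ∀ h s a, ζ h s a = TV h s a - Qhat h s a) :
    ∀ h, 1 ≤ h → h ≤ H → ∀ s a, 0 ≤ ζ h s a ∧ ζ h s a ≤ 2 * Γ h s a := by
  intro h h1 hH s a
  have hg := hΓ h h1 hH s a
  have ha := abs_le.mp (happrox h h1 hH s a)
  have h0 := hTV0 h h1 hH s a
  have hub := hTVub h h1 hH s a
  rw [hζ, hQhat, hQbar]
  constructor
  · have : min (max (That h s a - Γ h s a) 0) ((H : ℝ) - h + 1) ≤
        max (That h s a - Γ h s a) 0 := min_le_left _ _
    have hmax : max (That h s a - Γ h s a) 0 ≤ TV h s a :=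
      max_le (by linarith [ha.2]) h0
    linarith
  · rcases le_total (max (That h s a - Γ h s a) 0) ((H : ℝ) - h + 1) with hc | hc
    · rw [min_eq_left hc]
      have : That h s a - Γ h s a ≤ max (That h s a - Γ h s a) 0 := le_max_left _ _
      linarith [ha.1]
    · rw [min_eq_right hc]; linarith
end
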